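/- arXiv:2004.09155 — 4 statements merged into one kernel-verified Lean document; each statement's English description precedes it below -/
import Mathlib

section
/- For any prime p > 5 with p ≡ 1 (mod 5), H_{(p-1)/2} + H_{(p-1)/5} - H_{3(p-1)/10} ≡ -5·f_p (mod p), where H_n = ∑_{k=1}^n 1/k and f_p = F_{p-1}/p is the Fibonacci quotient. -/
/-!
Write `p = 10m + 1` and let `ζ` be a primitive fifth root of unity in `𝔽_p`. The Gauss periods
`α = -(ζ + ζ⁴)` and `β = -(ζ² + ζ³)` are the roots of `X² - X - 1`, so Binet's formula
`(α - β) F_{p-1} = α β^p - β α^p` and Fermat give `p ∣ F_{p-1}`. Lifting `ζ` to a fifth root of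
unity `ω` in `ℤ/p²` and expanding `(ω + ω⁴)^p` with `C(p,k)/p ≡ (-1)^(k-1)/k` expresses the
Fibonacci quotient `f_p` through Granville's truncated logarithm `£(x) = ∑_{0<k<p} x^k/k` at
`-ζ²` and `-ζ⁴`. The functional equations `x £(1/x) = -£(x)` and
`£(x²) = (1 + x) £(x) + (1 - x) £(-x)` turn this into `2 ∑_j ζ^j £(ζ^j) = 5 f_p`. By the
roots-of-unity filter, `∑_j ζ^j £(ζ^j) = 5 ∑_{k ≡ 4 (5)} 1/k`, and the reflections `k ↦ p - k`
and `k ↦ 5k - p` show `H_{5m} + H_{2m} - H_{3m} = -10 ∑_{k ≡ 4 (5)} 1/k`.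
-/

open Finset

theorem sum_Ioo_zero_add_one_eq_sum_range {M : Type*} [AddCommMonoid M] (f : ℕ → M) (n : ℕ) :
    ∑ k ∈ Ioo 0 (n + 1), f k = ∑ i ∈ range n, f (i + 1) := by
  rw [← Ico_add_one_left_eq_Ioo, zero_add, sum_Ico_eq_sum_range, Nat.add_sub_cancel]
  simp only [add_comm 1]

theorem sum_range_two_mul {M : Type*} [AddCommMonoid M] (f : ℕ → M) (n : ℕ) :
    ∑ k ∈ range (2 * n), f k = ∑ i ∈ range n, (f (2 * i) + f (2 * i + 1)) := by
  induction n with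
  | zero => simp
  | succ n ih => rw [mul_add_one, sum_range_succ, sum_range_succ, sum_range_succ, ih, add_assoc]

theorem sum_Ioo_zero_eq_sum_odd_add_even {M : Type*} [AddCommMonoid M] (f : ℕ → M) {m n : ℕ}
    (hm : m = 2 * n + 1) :
    ∑ k ∈ Ioo 0 m, f k = ∑ i ∈ range n, (f (2 * i + 1) + f (2 * i + 2)) := by
  rw [hm, sum_Ioo_zero_add_one_eq_sum_range, sum_range_two_mul]

theorem sum_Ioo_zero_eq_sum_halves {M : Type*} [AddCommMonoid M] (f : ℕ → M) {m n : ℕ}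
    (hm : m = 2 * n + 1) :
    ∑ k ∈ Ioo 0 m, f k = ∑ i ∈ range n, (f (i + 1) + f (n + 1 + i)) := by
  rw [hm, sum_Ioo_zero_add_one_eq_sum_range, two_mul, sum_range_add, sum_add_distrib]
  simp only [add_right_comm n _ 1]

theorem IsPrimitiveRoot.sum_pow_pow_eq_ite {K : Type*} [Field K] {ζ : K} {n : ℕ}
    (hζ : IsPrimitiveRoot ζ n) (m : ℕ) :
    ∑ j ∈ range n, (ζ ^ m) ^ j = if n ∣ m then (n : K) else 0 := by
  split_ifs with hdvd
  · simp [(hζ.pow_eq_one_iff_dvd m).2 hdvd]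
  · rw [geom_sum_eq (mt (hζ.pow_eq_one_iff_dvd m).1 hdvd), ← pow_mul, mul_comm, pow_mul,
      hζ.pow_eq_one, one_pow, sub_self, zero_div]

theorem sub_mul_fib_eq_pow_sub_pow {R : Type*} [CommRing R] {α β : R} (hsum : α + β = 1)
    (hprod : α * β = -1) (n : ℕ) : (α - β) * Nat.fib n = α ^ n - β ^ n := by
  induction n using Nat.twoStepInduction with
  | zero => simp
  | one => simp
  | more n ih₀ ih₁ =>
    rw [Nat.fib_add_two, Nat.cast_add]
    linear_combination ih₀ + ih₁ - (α ^ (n + 1) - β ^ (n + 1)) * hsum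
      + (α ^ n - β ^ n) * hprod

theorem gaussPeriods_add_eq_one_and_mul_eq_neg_one {R : Type*} [CommRing R] {ω : R}
    (hω : ∑ i ∈ range 5, ω ^ i = 0) :
    -(ω + ω ^ 4) + -(ω ^ 2 + ω ^ 3) = 1 ∧ -(ω + ω ^ 4) * -(ω ^ 2 + ω ^ 3) = -1 := by
  simp only [sum_range_succ, sum_range_zero] at hω
  constructor
  · linear_combination -hω
  · linear_combination (1 + (ω - 1) * (ω + ω ^ 2)) * hω

theorem sub_mul_fib_eq_mul_pow_succ_sub {R : Type*} [CommRing R] {α β : R} (hsum : α + β = 1)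
    (hprod : α * β = -1) (n : ℕ) :
    (α - β) * Nat.fib n = α * β ^ (n + 1) - β * α ^ (n + 1) := by
  linear_combination sub_mul_fib_eq_pow_sub_pow hsum hprod n + (α ^ n - β ^ n) * hprod

def truncLog (p : ℕ) (x : ZMod p) : ZMod p := ∑ k ∈ Ioo 0 p, x ^ k * (k : ZMod p)⁻¹

section ModP

variable {p : ℕ} [hp : Fact p.Prime]

theorem ZMod.natCast_ne_zero_of_pos_of_lt {k : ℕ} (hk₀ : 0 < k) (hk : k < p) :
    (k : ZMod p) ≠ 0 := by
  rw [Ne, ZMod.natCast_eq_zero_iff]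
  exact Nat.not_dvd_of_pos_of_lt hk₀ hk

theorem ZMod.exists_isPrimitiveRoot_of_dvd {q : ℕ} [Fact q.Prime] (hq : q ∣ p - 1) :
    ∃ ζ : ZMod p, IsPrimitiveRoot ζ q := by
  obtain ⟨g, hg⟩ := exists_prime_orderOf_dvd_card' (G := (ZMod p)ˣ) q
    (by rwa [Nat.card_eq_fintype_card, ZMod.card_units])
  exact ⟨g, IsPrimitiveRoot.coe_units_iff.2 (hg ▸ IsPrimitiveRoot.orderOf g)⟩

theorem ZMod.natCast_choose_pred {k : ℕ} (hk : k < p) :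
    ((p - 1).choose k : ZMod p) = (-1) ^ k := by
  induction k with
  | zero => simp
  | succ k ih =>
    have hpascal : (p - 1).choose k + (p - 1).choose (k + 1) = p.choose (k + 1) := by
      conv_rhs => rw [← Nat.sub_add_cancel hp.out.one_le]
      exact (Nat.choose_succ_succ' _ _).symm
    have hvanish : (p.choose (k + 1) : ZMod p) = 0 :=
      (ZMod.natCast_eq_zero_iff _ _).2 (hp.out.dvd_choose_self k.succ_ne_zero hk)
    rw [← hpascal, Nat.cast_add, ih (by omega)] at hvanish
    linear_combination hvanish

theorem ZMod.natCast_choose_div_prime {k : ℕ} (hk₀ : 0 < k) (hk : k < p) :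
    ((p.choose k / p : ℕ) : ZMod p) = -(-1) ^ k * (k : ZMod p)⁻¹ := by
  have hnat : p.choose k / p * k = (p - 1).choose (k - 1) := by
    have := Nat.add_one_mul_choose_eq (p - 1) (k - 1)
    rw [Nat.sub_add_cancel hp.out.one_le, Nat.sub_add_cancel hk₀] at this
    rw [Nat.div_mul_right_comm (hp.out.dvd_choose_self hk₀.ne' hk), ← this,
      Nat.mul_div_cancel_left _ hp.out.pos]
  rw [← div_eq_mul_inv, eq_div_iff (ZMod.natCast_ne_zero_of_pos_of_lt hk₀ hk), ← Nat.cast_mul,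
    hnat, ZMod.natCast_choose_pred (by omega), ← Nat.sub_add_cancel hk₀, pow_succ]
  simp

theorem sum_pow_mul_choose_div_eq_truncLog {x y z : ZMod p} (hx : x = y * z) :
    ∑ k ∈ Ioo 0 p, x ^ k * y ^ (p - k) * ((p.choose k / p : ℕ) : ZMod p)
      = -y * truncLog p (-z) := by
  rw [truncLog, mul_sum]
  refine sum_congr rfl fun k hk => ?_
  rw [mem_Ioo] at hk
  have hpow : x ^ k * y ^ (p - k) = y * z ^ k := by
    rw [hx, mul_pow, mul_right_comm, ← pow_add, Nat.add_sub_cancel' hk.2.le, ZMod.pow_card]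
  rw [hpow, ZMod.natCast_choose_div_prime hk.1 hk.2, neg_pow]
  ring

theorem truncLog_inv {x y : ZMod p} (hxy : x * y = 1) : x * truncLog p y = -truncLog p x := by
  rw [truncLog, truncLog, mul_sum, ← sum_neg_distrib]
  refine sum_nbij' (fun k => p - k) (fun k => p - k) ?_ ?_ ?_ ?_ ?_ <;>
    simp only [mem_Ioo] <;> try (intros; omega)
  intro k hk
  have hpow : x ^ (p - k) = x * y ^ k := calc
    x ^ (p - k) = x ^ (p - k) * (x * y) ^ k := by rw [hxy, one_pow, mul_one]
    _ = x ^ p * y ^ k := by rw [mul_pow, ← mul_assoc, ← pow_add, Nat.sub_add_cancel hk.2.le]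
    _ = x * y ^ k := by rw [ZMod.pow_card]
  rw [hpow, Nat.cast_sub hk.2.le, ZMod.natCast_self, zero_sub, inv_neg]
  ring

theorem truncLog_one (hp2 : p ≠ 2) : truncLog p 1 = 0 := by
  have h := truncLog_inv (p := p) (mul_one 1)
  rw [one_mul] at h
  have h2 : (2 : ZMod p) ≠ 0 := Ring.two_ne_zero (by rwa [ZMod.ringChar_zmod_n])
  exact (mul_eq_zero.1 (by linear_combination h : 2 * truncLog p 1 = 0)).resolve_left h2

theorem truncLog_sq (hp2 : p ≠ 2) (x : ZMod p) :
    truncLog p (x ^ 2) = (1 + x) * truncLog p x + (1 - x) * truncLog p (-x) := by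
  obtain ⟨h, hph⟩ := hp.out.odd_of_ne_two hp2
  have h2 : (2 : ZMod p) ≠ 0 := Ring.two_ne_zero (by rwa [ZMod.ringChar_zmod_n])
  rw [truncLog, sum_Ioo_zero_eq_sum_halves _ hph, truncLog, truncLog,
    sum_Ioo_zero_eq_sum_odd_add_even _ hph, sum_Ioo_zero_eq_sum_odd_add_even _ hph, mul_sum,
    mul_sum, ← sum_add_distrib]
  refine sum_congr rfl fun i _ => ?_
  have hfirst : ((i + 1 : ℕ) : ZMod p)⁻¹ = 2 * ((2 * i + 2 : ℕ) : ZMod p)⁻¹ := by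
    rw [show 2 * i + 2 = 2 * (i + 1) by ring, Nat.cast_mul, mul_inv, ← mul_assoc, Nat.cast_two,
      mul_inv_cancel₀ h2, one_mul]
  have hsecond : ((h + 1 + i : ℕ) : ZMod p)⁻¹ = 2 * ((2 * i + 1 : ℕ) : ZMod p)⁻¹ := by
    have hcast : ((2 * i + 1 : ℕ) : ZMod p) = 2 * ((h + 1 + i : ℕ) : ZMod p) := by
      have hzero : ((2 * h + 1 : ℕ) : ZMod p) = 0 := by rw [← hph, ZMod.natCast_self]
      push_cast at hzero ⊢
      linear_combination -hzero
    rw [hcast, mul_inv, ← mul_assoc, mul_inv_cancel₀ h2, one_mul]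
  have hfrob : (x ^ 2) ^ (h + 1 + i) = x * x ^ (2 * i + 1) := by
    calc (x ^ 2) ^ (h + 1 + i) = x ^ (2 * h + 1) * x ^ (2 * i + 1) := by ring
      _ = x * x ^ (2 * i + 1) := by rw [← hph, ZMod.pow_card]
  rw [hfirst, hsecond, hfrob, Odd.neg_pow ⟨i, rfl⟩, Even.neg_pow ⟨i + 1, by ring⟩]
  ring

theorem sum_pow_mul_truncLog_eq {n : ℕ} {ζ : ZMod p} (hζ : IsPrimitiveRoot ζ n) :
    ∑ j ∈ range n, ζ ^ j * truncLog p (ζ ^ j)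
      = n * ∑ k ∈ Ioo 0 p with n ∣ k + 1, (k : ZMod p)⁻¹ := by
  simp only [truncLog, mul_sum]
  rw [sum_comm, sum_filter]
  refine sum_congr rfl fun k _ => ?_
  have hterm : ∀ j, ζ ^ j * ((ζ ^ j) ^ k * (k : ZMod p)⁻¹) = (ζ ^ (k + 1)) ^ j * (k : ZMod p)⁻¹ :=
    fun j => by ring
  simp only [hterm, ← sum_mul, hζ.sum_pow_pow_eq_ite, ite_mul, zero_mul]

theorem prime_dvd_fib_pred (h5 : p % 5 = 1) : p ∣ Nat.fib (p - 1) := by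
  have : Fact (Nat.Prime 5) := ⟨by norm_num⟩
  obtain ⟨ζ, hζ⟩ := ZMod.exists_isPrimitiveRoot_of_dvd (p := p) (q := 5) (by omega)
  obtain ⟨hsum, hprod⟩ :=
    gaussPeriods_add_eq_one_and_mul_eq_neg_one (hζ.geom_sum_eq_zero (by norm_num))
  set α := -(ζ + ζ ^ 4)
  set β := -(ζ ^ 2 + ζ ^ 3)
  have hfib := sub_mul_fib_eq_mul_pow_succ_sub hsum hprod (p - 1)
  rw [Nat.sub_add_cancel hp.out.one_le, ZMod.pow_card, ZMod.pow_card, mul_comm β α, sub_self]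
    at hfib
  have hsq : (α - β) ^ 2 = ((5 : ℕ) : ZMod p) := by
    push_cast
    linear_combination (α + β + 1) * hsum - 4 * hprod
  have hsub : α - β ≠ 0 := fun h => by
    rw [h, zero_pow two_ne_zero, eq_comm, ZMod.natCast_eq_zero_iff] at hsq
    have := Nat.le_of_dvd (by norm_num) hsq
    have := hp.out.two_le
    omega
  exact (ZMod.natCast_eq_zero_iff _ _).1 ((mul_eq_zero.1 hfib).resolve_left hsub)

end ModP

section ModPSq

variable {p : ℕ} [hp : Fact p.Prime]

local notation "π" => ZMod.castHom (dvd_pow_self p two_ne_zero) (ZMod p)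

theorem castHom_sq_eq_natCast_val (x : ZMod (p ^ 2)) : π x = (x.val : ZMod p) := by
  rw [ZMod.castHom_apply, ← ZMod.natCast_val]

theorem castHom_sq_eq_zero_of_natCast_mul_eq_zero {x : ZMod (p ^ 2)}
    (h : (p : ZMod (p ^ 2)) * x = 0) : π x = 0 := by
  rw [← ZMod.natCast_zmod_val x, ← Nat.cast_mul, ZMod.natCast_eq_zero_iff] at h
  have h' : p * p ∣ p * x.val := by rw [← pow_two]; exact h
  rw [castHom_sq_eq_natCast_val, ZMod.natCast_eq_zero_iff]
  exact Nat.dvd_of_mul_dvd_mul_left hp.out.pos h'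

theorem exists_eq_natCast_mul_of_castHom_sq_eq_zero {x : ZMod (p ^ 2)} (h : π x = 0) :
    ∃ c : ZMod (p ^ 2), x = (p : ZMod (p ^ 2)) * c := by
  rw [castHom_sq_eq_natCast_val, ZMod.natCast_eq_zero_iff] at h
  obtain ⟨c, hc⟩ := h
  exact ⟨c, by rw [← ZMod.natCast_zmod_val x, hc, Nat.cast_mul]⟩

theorem isUnit_of_castHom_sq_ne_zero {x : ZMod (p ^ 2)} (h : π x ≠ 0) : IsUnit x := by
  rw [castHom_sq_eq_natCast_val, Ne, ZMod.natCast_eq_zero_iff] at h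
  rw [← ZMod.natCast_zmod_val x]
  exact (ZMod.isUnit_natCast_iff_not_dvd_pow hp.out two_pos).2 h

theorem pow_prime_eq_one_of_castHom_sq_eq_one {x : ZMod (p ^ 2)} (h : π x = 1) : x ^ p = 1 := by
  obtain ⟨c, hc⟩ := exists_eq_natCast_mul_of_castHom_sq_eq_zero (x := x - 1)
    (by rw [map_sub, map_one, h, sub_self])
  have hp2 : (p : ZMod (p ^ 2)) ^ 2 = 0 := by exact_mod_cast ZMod.natCast_self (p ^ 2)
  obtain ⟨d, hd⟩ := sq_dvd_add_pow_sub_sub ((p : ZMod (p ^ 2)) * c) 1 p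
  rw [mul_pow, hp2, zero_mul, zero_mul] at hd
  rw [show x = 1 + p * c by linear_combination hc]
  linear_combination hd + c * hp2

theorem exists_pow_eq_one_castHom_sq_eq {n : ℕ} {ζ : ZMod p} (hζ : ζ ^ n = 1) :
    ∃ ω : ZMod (p ^ 2), ω ^ n = 1 ∧ π ω = ζ := by
  obtain ⟨w, hw⟩ := ZMod.castHom_surjective (dvd_pow_self p two_ne_zero) ζ
  refine ⟨w ^ p, ?_, by rw [map_pow, hw, ZMod.pow_card]⟩
  rw [← pow_mul, mul_comm, pow_mul]
  exact pow_prime_eq_one_of_castHom_sq_eq_one (by rw [map_pow, hw, hζ])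

theorem exists_add_pow_prime_sq_eq {x y : ZMod (p ^ 2)} {z : ZMod p} (hx : x ^ p = x)
    (hy : y ^ p = y) (hxyz : π x = π y * z) :
    ∃ S : ZMod (p ^ 2),
      (x + y) ^ p = x + y + (p : ZMod (p ^ 2)) * S ∧ π S = -π y * truncLog p (-z) := by
  refine ⟨_, by rw [add_pow_prime_eq' hp.out, hx, hy], ?_⟩
  simp only [map_sum, map_mul, map_pow, map_natCast]
  exact sum_pow_mul_choose_div_eq_truncLog hxyz

theorem sub_mul_fib_quotient_eq (h5 : p % 5 = 1) {η : ZMod p} (hη : IsPrimitiveRoot η 5) {f : ℕ}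
    (hf : Nat.fib (p - 1) = p * f) :
    (η ^ 2 + η ^ 3 - η - η ^ 4) * f
      = (η + η ^ 2) * truncLog p (-η ^ 2) - (η ^ 2 + η ^ 4) * truncLog p (-η ^ 4) := by
  obtain ⟨ω, hω5, hωη⟩ := exists_pow_eq_one_castHom_sq_eq hη.pow_eq_one
  have hgeom : ∑ i ∈ range 5, ω ^ i = 0 := by
    have hunit : IsUnit (ω - 1) := isUnit_of_castHom_sq_ne_zero <| by
      rw [map_sub, map_one, hωη]
      exact sub_ne_zero.2 (hη.ne_one (by norm_num))
    exact hunit.mul_left_eq_zero.1 (by rw [geom_sum_mul, hω5, sub_self])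
  obtain ⟨hsum, hprod⟩ := gaussPeriods_add_eq_one_and_mul_eq_neg_one hgeom
  have hfrob : ∀ j, (ω ^ j) ^ p = ω ^ j := fun j => by
    rw [← pow_mul, mul_comm, pow_mul, pow_eq_pow_mod p hω5, h5, pow_one]
  have hωp : ω ^ p = ω := by simpa using hfrob 1
  have hη5 := hη.pow_eq_one
  obtain ⟨S₁, hS₁, hπS₁⟩ := exists_add_pow_prime_sq_eq hωp (hfrob 4) (z := η ^ 2)
    (by simp only [map_pow, hωη]; linear_combination (-η) * hη5)
  obtain ⟨S₂, hS₂, hπS₂⟩ := exists_add_pow_prime_sq_eq (hfrob 2) (hfrob 3) (z := η ^ 4)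
    (by simp only [map_pow, hωη]; linear_combination (-η ^ 2) * hη5)
  have hfib := sub_mul_fib_eq_mul_pow_succ_sub hsum hprod (p - 1)
  have hodd : Odd p := hp.out.odd_of_ne_two (by omega)
  rw [Nat.sub_add_cancel hp.out.one_le, hodd.neg_pow, hodd.neg_pow, hS₁, hS₂, hf,
    Nat.cast_mul] at hfib
  -- The Gauss periods satisfy `α ^ p = α - p S₁` and `β ^ p = β - p S₂`, so `hfib` is `p` times
  -- the relation to be reduced mod `p`.
  have hzero : (p : ZMod (p ^ 2)) * ((ω ^ 2 + ω ^ 3 - ω - ω ^ 4) * f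
      + (ω ^ 2 + ω ^ 3) * S₁ - (ω + ω ^ 4) * S₂) = 0 := by
    linear_combination hfib
  have h := castHom_sq_eq_zero_of_natCast_mul_eq_zero hzero
  simp only [map_sub, map_add, map_mul, map_pow, map_natCast, hωη, hπS₁, hπS₂] at h
  linear_combination h + ((η + η ^ 2) * truncLog p (-η ^ 2) - η ^ 2 * truncLog p (-η ^ 4)) * hη5

end ModPSq

section FibonacciQuotient

variable {p : ℕ} [hp : Fact p.Prime]

theorem two_mul_sum_pow_mul_truncLog_eq (h5 : p % 5 = 1) {ζ : ZMod p} (hζ : IsPrimitiveRoot ζ 5)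
    {f : ℕ} (hf : Nat.fib (p - 1) = p * f) :
    2 * ∑ j ∈ range 5, ζ ^ j * truncLog p (ζ ^ j) = 5 * f := by
  have hp2 : p ≠ 2 := by omega
  have hz5 := hζ.pow_eq_one
  have hcyc : 1 + ζ + ζ ^ 2 + ζ ^ 3 + ζ ^ 4 = 0 := by
    simpa [sum_range_succ] using hζ.geom_sum_eq_zero (by norm_num)
  have hcore := sub_mul_fib_quotient_eq h5 (hζ.pow_of_coprime 3 (by norm_num)) hf
  rw [show (ζ ^ 3) ^ 2 = ζ by rw [← pow_mul, pow_eq_pow_mod _ hz5, pow_one],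
    show (ζ ^ 3) ^ 4 = ζ ^ 2 by rw [← pow_mul, pow_eq_pow_mod _ hz5]] at hcore
  have hinv₁ := truncLog_inv (show ζ * ζ ^ 4 = 1 by rw [← pow_succ']; exact hz5)
  have hinv₂ := truncLog_inv (show ζ ^ 2 * ζ ^ 3 = 1 by rw [← pow_add]; exact hz5)
  have hsq₁ := truncLog_sq hp2 ζ
  have hsq₂ := truncLog_sq hp2 (ζ ^ 2)
  rw [← pow_mul] at hsq₂
  simp only [sum_range_succ, sum_range_zero, pow_zero, pow_one, one_mul, zero_add,
    truncLog_one hp2]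
  -- All `£(±ζ^j)` are now linear in `£(ζ)`, `£(ζ²)`, `£(-ζ)`, `£(-ζ²)` over `ℤ[ζ]`.
  linear_combination (1 + 2 * ζ ^ 2 + 2 * ζ ^ 3) * hcore + (ζ + ζ ^ 3) * hinv₁
    + (2 * ζ) * hinv₂ + (-ζ + ζ ^ 2) * hsq₁ + (-1 - ζ - 2 * ζ ^ 2 - ζ ^ 3) * hsq₂
    + ((-1 - ζ) * truncLog p (ζ ^ 2) + truncLog p (ζ ^ 4) + 2 * ζ ^ 2 * truncLog p (-ζ)
      + (-1 - ζ) * truncLog p (-ζ ^ 2)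
      + (-5 + 4 * ζ + 2 * ζ ^ 2 - 2 * ζ ^ 3 + ζ ^ 4 - ζ ^ 5 + 2 * ζ ^ 6 - 2 * ζ ^ 8) * f)
      * hcyc

end FibonacciQuotient

def harmonicZMod (p n : ℕ) : ZMod p := ∑ k ∈ Icc 1 n, (k : ZMod p)⁻¹

theorem harmonicZMod_sub_harmonicZMod (p : ℕ) {a b : ℕ} (hab : a ≤ b) :
    harmonicZMod p b - harmonicZMod p a = ∑ k ∈ Ioc a b, (k : ZMod p)⁻¹ := by
  have hIoc (n : ℕ) : Icc 1 n = Ioc 0 n := Icc_add_one_left_eq_Ioc 0 n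
  rw [harmonicZMod, harmonicZMod, hIoc, hIoc, ← sum_Ioc_consecutive _ (Nat.zero_le a) hab,
    add_sub_cancel_left]

section Harmonic

variable {p : ℕ} [hp : Fact p.Prime]

theorem two_mul_harmonicZMod_two_mul (hp2 : p ≠ 2) (n : ℕ) :
    2 * harmonicZMod p (2 * n)
      = 2 * ∑ i ∈ range n, ((2 * i + 1 : ℕ) : ZMod p)⁻¹ + harmonicZMod p n := by
  have h2 : (2 : ZMod p) ≠ 0 := Ring.two_ne_zero (by rwa [ZMod.ringChar_zmod_n])
  have hIcc : ∀ m, Icc 1 m = Ioo 0 (m + 1) := fun m => by ext; simp; omega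
  rw [harmonicZMod, harmonicZMod, hIcc, hIcc, sum_Ioo_zero_eq_sum_odd_add_even _ rfl,
    sum_Ioo_zero_add_one_eq_sum_range, sum_add_distrib, mul_add, add_right_inj, mul_sum]
  refine sum_congr rfl fun i _ => ?_
  rw [show 2 * i + 2 = 2 * (i + 1) by ring, Nat.cast_mul, mul_inv, ← mul_assoc, Nat.cast_two,
    mul_inv_cancel₀ h2, one_mul]

theorem sum_Ioc_inv_eq_neg_two_mul_sum_odd {a h n : ℕ} (hph : p = 2 * h + 1) (hn : a + n = h) :
    ∑ k ∈ Ioc a h, (k : ZMod p)⁻¹ = -2 * ∑ i ∈ range n, ((2 * i + 1 : ℕ) : ZMod p)⁻¹ := by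
  have h2 : (2 : ZMod p) ≠ 0 := Ring.two_ne_zero (by rw [ZMod.ringChar_zmod_n]; omega)
  rw [mul_sum]
  refine sum_nbij' (fun k => h - k) (fun i => h - i) ?_ ?_ ?_ ?_ ?_ <;>
    simp only [mem_Ioc, mem_range] <;> try (intros; omega)
  intro k hk
  have hcast : ((2 * (h - k) + 1 : ℕ) : ZMod p) = -2 * k := by
    have hzero : ((2 * (h - k) + 1 + 2 * k : ℕ) : ZMod p) = 0 := by
      rw [show 2 * (h - k) + 1 + 2 * k = p by omega, ZMod.natCast_self]
    push_cast at hzero ⊢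
    linear_combination hzero
  rw [hcast, mul_inv, inv_neg, ← mul_assoc, neg_mul_neg, mul_inv_cancel₀ h2, one_mul]

theorem sum_Ioc_inv_eq_five_mul_sum_filter {m : ℕ} (hm : p = 10 * m + 1) :
    ∑ j ∈ Ioc (2 * m) (4 * m), (j : ZMod p)⁻¹
      = 5 * ∑ k ∈ Ioo 0 p with 5 ∣ k + 1, (k : ZMod p)⁻¹ := by
  have h5 : (5 : ZMod p) ≠ 0 := by
    exact_mod_cast ZMod.natCast_ne_zero_of_pos_of_lt (k := 5) (by norm_num)
      (by have := hp.out.two_le; omega)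
  rw [mul_sum]
  refine sum_nbij' (fun j => 5 * j - p) (fun k => (k + p) / 5) ?_ ?_ ?_ ?_ ?_ <;>
    simp only [mem_Ioc, mem_filter, mem_Ioo] <;> try (intros; omega)
  intro j hj
  have hcast : ((5 * j - p : ℕ) : ZMod p) = 5 * j := by
    rw [Nat.cast_sub (by omega), ZMod.natCast_self, sub_zero, Nat.cast_mul, Nat.cast_ofNat]
  rw [hcast, mul_inv, ← mul_assoc, mul_inv_cancel₀ h5, one_mul]

theorem harmonic_combination_eq_neg_ten_mul_sum_filter {m : ℕ} (hm : p = 10 * m + 1) :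
    harmonicZMod p (5 * m) + harmonicZMod p (2 * m) - harmonicZMod p (3 * m)
      = -10 * ∑ k ∈ Ioo 0 p with 5 ∣ k + 1, (k : ZMod p)⁻¹ := by
  have hupper := harmonicZMod_sub_harmonicZMod p (show 3 * m ≤ 5 * m by omega)
  rw [sum_Ioc_inv_eq_neg_two_mul_sum_odd (h := 5 * m) (n := 2 * m) (by omega) (by omega)]
    at hupper
  have hmiddle := harmonicZMod_sub_harmonicZMod p (show 2 * m ≤ 4 * m by omega)
  rw [sum_Ioc_inv_eq_five_mul_sum_filter hm] at hmiddle
  have hsplit := two_mul_harmonicZMod_two_mul (p := p) (by omega) (2 * m)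
  rw [← mul_assoc, show 2 * 2 = 4 by norm_num] at hsplit
  linear_combination hupper - 2 * hmiddle + hsplit

end Harmonic

theorem harmonic_combination_eq_neg_five_fib_quotient_general (p : ℕ) (hp : p.Prime)
    (h5 : p % 5 = 1) :
    (∑ k ∈ Finset.Icc 1 ((p - 1) / 2), ((k : ZMod p))⁻¹)
      + (∑ k ∈ Finset.Icc 1 ((p - 1) / 5), ((k : ZMod p))⁻¹)
      - (∑ k ∈ Finset.Icc 1 (3 * (p - 1) / 10), ((k : ZMod p))⁻¹)
      = -5 * (((Nat.fib (p - 1) : ℤ) / (p : ℤ) : ℤ) : ZMod p) := by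
  have : Fact p.Prime := ⟨hp⟩
  have : Fact (Nat.Prime 5) := ⟨by norm_num⟩
  have hodd := Nat.odd_iff.1 (hp.odd_of_ne_two (by omega))
  obtain ⟨m, hm⟩ : ∃ m, p = 10 * m + 1 := ⟨p / 10, by omega⟩
  obtain ⟨ζ, hζ⟩ := ZMod.exists_isPrimitiveRoot_of_dvd (p := p) (q := 5) (by omega)
  obtain ⟨f, hf⟩ := prime_dvd_fib_pred h5
  have hquot : (((Nat.fib (p - 1) : ℤ) / (p : ℤ) : ℤ) : ZMod p) = f := by
    rw [hf, Nat.cast_mul, Int.mul_ediv_cancel_left _ (by exact_mod_cast hp.ne_zero),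
      Int.cast_natCast]
  rw [hquot, show (p - 1) / 2 = 5 * m by omega, show (p - 1) / 5 = 2 * m by omega,
    show 3 * (p - 1) / 10 = 3 * m by omega]
  change harmonicZMod p (5 * m) + harmonicZMod p (2 * m) - harmonicZMod p (3 * m) = _
  have hfilter := sum_pow_mul_truncLog_eq hζ
  push_cast at hfilter
  rw [harmonic_combination_eq_neg_ten_mul_sum_filter hm]
  linear_combination 2 * hfilter - two_mul_sum_pow_mul_truncLog_eq h5 hζ hf

theorem harmonic_combination_eq_neg_five_fib_quotient (p : ℕ) (hp : p.Prime) (hp5 : 5 < p)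
    (h5 : p % 5 = 1) :
    (∑ k ∈ Finset.Icc 1 ((p - 1) / 2), ((k : ZMod p))⁻¹)
      + (∑ k ∈ Finset.Icc 1 ((p - 1) / 5), ((k : ZMod p))⁻¹)
      - (∑ k ∈ Finset.Icc 1 (3 * (p - 1) / 10), ((k : ZMod p))⁻¹)
      = -5 * (((Nat.fib (p - 1) : ℤ) / (p : ℤ) : ℤ) : ZMod p) :=
  harmonic_combination_eq_neg_five_fib_quotient_general p hp h5
end

section
/- For any integers n ≥ m ≥ 1 and any complex number z, ((z+1)^{n+1}/n)·∑_{k=0}^{m-1} z^k/C(n-1,k) = ∑_{k=1}^{n} C(n,k)·z^{n-k}/k + (H_n + H_m - H_{n-m})·z^n - (z^m/C(n,m))·∑_{0 ≤ k ≤ n, k ≠ m} C(n,k)·z^{n-k}/(k-m). -/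
/-!
Write `T m` for `z^m / C(n,m) * ∑_{k ≠ m} C(n,k) z^(n-k) / (k-m)`;
then `T 0 = ∑_{k=1}^n C(n,k) z^(n-k) / k`, and the identity follows by induction on `m`
from the telescoping relation
`T m - T (m+1) = (z+1)^(n+1) z^m / (n C(n-1,m)) - (1/(m+1) + 1/(n-m)) z^n`.
Shifting `k` by one in `T (m+1)`, this relation reduces coefficientwise to
`(C(n,k)/C(n,m) - C(n,k+1)/C(n,m+1)) / (k-m) = C(n+1,k+1) / (n C(n-1,m))` for `k ≠ m`,
and the resulting sum `∑_k C(n+1,k+1) z^(n-k)` is `(z+1)^(n+1) - z^(n+1)` by the binomial theorem.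
-/

open Finset

lemma sum_range_choose_succ_mul_pow {R : Type*} [CommRing R] (n : ℕ) (z : R) :
    ∑ k ∈ range (n + 1), ((n + 1).choose (k + 1) : R) * z ^ (n - k)
      = (z + 1) ^ (n + 1) - z ^ (n + 1) := by
  rw [add_comm z, add_pow, sum_range_succ' _ (n + 1)]
  simp [mul_comm]

section

variable {K : Type*} [Field K] [CharZero K]

lemma cast_choose_succ_right {n k : ℕ} (hk : k ≤ n) :
    (n.choose (k + 1) : K) = n.choose k * (n - k) / (k + 1) := by
  rw [eq_div_iff k.cast_add_one_ne_zero, ← Nat.cast_sub hk]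
  exact_mod_cast Nat.choose_succ_right_eq n k

lemma cast_choose_pred {n m : ℕ} (hm : m < n) :
    ((n - 1).choose m : K) = n.choose m * (n - m) / n := by
  obtain ⟨n, rfl⟩ : ∃ n', n = n' + 1 := ⟨n - 1, by omega⟩
  rw [Nat.add_sub_cancel, eq_div_iff (Nat.cast_ne_zero.2 n.succ_ne_zero), ← Nat.cast_sub hm.le]
  exact_mod_cast Nat.choose_mul_succ_eq n m

lemma cast_succ_choose_succ (n k : ℕ) :
    ((n + 1).choose (k + 1) : K) = (n + 1) * n.choose k / (k + 1) := by
  rw [eq_div_iff k.cast_add_one_ne_zero]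
  exact_mod_cast (Nat.add_one_mul_choose_eq n k).symm

lemma choose_div_sub_choose_div {n m k : ℕ} (hm : m < n) (hk : k ≤ n) (hkm : k ≠ m) :
    (n.choose k : K) / ((k - m) * n.choose m) - n.choose (k + 1) / ((k - m) * n.choose (m + 1))
      = (n + 1).choose (k + 1) / (n * (n - 1).choose m) := by
  rw [cast_choose_succ_right hk, cast_choose_succ_right hm.le, cast_succ_choose_succ,
    cast_choose_pred hm]
  have hkm : (k - m : K) ≠ 0 := sub_ne_zero.2 (Nat.cast_injective.ne hkm)
  have hnm : (n - m : K) ≠ 0 := sub_ne_zero.2 (Nat.cast_injective.ne hm.ne')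
  have hn : (n : K) ≠ 0 := Nat.cast_ne_zero.2 (by omega)
  have hc : (n.choose m : K) ≠ 0 := Nat.cast_ne_zero.2 (Nat.choose_pos hm.le).ne'
  have := k.cast_add_one_ne_zero (R := K)
  have := m.cast_add_one_ne_zero (R := K)
  field_simp
  ring

/-- This is `T m` with `z ^ m` moved inside the sum; its term `k = m` is `0` by the convention
`x / 0 = 0`. -/
def tailSum (n m : ℕ) (z : K) : K :=
  ∑ k ∈ range (n + 1), (n.choose k : K) / ((k - m) * n.choose m) * z ^ (n + m - k)

lemma tailSum_eq_mul_sum_erase (n m : ℕ) (z : K) :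
    tailSum n m z = z ^ m / n.choose m *
      ∑ k ∈ (range (n + 1)).erase m, (n.choose k : K) * z ^ (n - k) / (k - m) := by
  rw [sum_erase _ (by simp), mul_sum]
  refine sum_congr rfl fun k hk => ?_
  rw [show n + m - k = n - k + m by grind, pow_add]
  simp only [div_eq_mul_inv, mul_inv]
  ring

lemma tailSum_zero (n : ℕ) (z : K) :
    tailSum n 0 z = ∑ k ∈ Icc 1 n, (n.choose k : K) * z ^ (n - k) / k := by
  rw [tailSum, sum_range_succ', ← Ico_add_one_right_eq_Icc, sum_Ico_eq_sum_range]
  simp [add_comm, div_mul_eq_mul_div]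

lemma tailSum_succ (n m : ℕ) (z : K) :
    tailSum n (m + 1) z = ∑ k ∈ range (n + 1),
        (n.choose (k + 1) : K) / ((k - m) * n.choose (m + 1)) * z ^ (n + m - k)
      - z ^ (n + m + 1) / ((m + 1) * n.choose (m + 1)) := by
  have hextend : tailSum n (m + 1) z = ∑ k ∈ range (n + 2),
      (n.choose k : K) / ((k - (m + 1 : ℕ)) * n.choose (m + 1)) * z ^ (n + (m + 1) - k) := by
    rw [tailSum, sum_range_succ _ (n + 1), Nat.choose_succ_self]
    simp
  rw [hextend, sum_range_succ', sub_eq_add_neg (∑ k ∈ range (n + 1), _)]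
  congr 1
  · refine sum_congr rfl fun k hk => ?_
    push_cast
    rw [show n + (m + 1) - (k + 1) = n + m - k by omega]
    ring
  · rw [Nat.choose_zero_right, Nat.cast_zero, zero_sub, neg_mul, div_neg, Nat.sub_zero,
      ← add_assoc]
    push_cast
    ring

lemma tailSum_sub_tailSum_succ {n m : ℕ} (hm : m < n) (z : K) :
    tailSum n m z - tailSum n (m + 1) z
      = (z + 1) ^ (n + 1) * z ^ m / (n * (n - 1).choose m)
        - (1 / (m + 1) + 1 / (n - m)) * z ^ n := by
  have hterm : ∀ k ∈ range (n + 1),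
      (n.choose k : K) / ((k - m) * n.choose m) * z ^ (n + m - k)
        - n.choose (k + 1) / ((k - m) * n.choose (m + 1)) * z ^ (n + m - k)
      = (n + 1).choose (k + 1) * z ^ (n + m - k) / (n * (n - 1).choose m)
        - if k = m then (n + 1).choose (m + 1) * z ^ n / (n * (n - 1).choose m) else 0 := by
    intro k hk
    split_ifs with hkm
    · subst hkm
      simp
    · rw [sub_zero, ← sub_mul, choose_div_sub_choose_div hm (mem_range_succ_iff.1 hk) hkm,
        div_mul_eq_mul_div]
  have hbinom : ∑ k ∈ range (n + 1), ((n + 1).choose (k + 1) : K) * z ^ (n + m - k)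
      = ((z + 1) ^ (n + 1) - z ^ (n + 1)) * z ^ m := by
    rw [← sum_range_choose_succ_mul_pow, sum_mul]
    refine sum_congr rfl fun k hk => ?_
    have := mem_range.1 hk
    rw [mul_assoc, ← pow_add, show n - k + m = n + m - k by omega]
  rw [tailSum_succ, tailSum, ← sub_add, ← sum_sub_distrib, sum_congr rfl hterm, sum_sub_distrib,
    sum_ite_eq', if_pos (by simp; omega), ← sum_div, hbinom, cast_choose_succ_right hm.le,
    cast_succ_choose_succ, cast_choose_pred hm]
  have hnm : (n - m : K) ≠ 0 := sub_ne_zero.2 (Nat.cast_injective.ne hm.ne')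
  have hn : (n : K) ≠ 0 := Nat.cast_ne_zero.2 (by omega)
  have hc : (n.choose m : K) ≠ 0 := Nat.cast_ne_zero.2 (Nat.choose_pos hm.le).ne'
  have := m.cast_add_one_ne_zero (R := K)
  field_simp
  ring

theorem mul_sum_range_pow_div_choose_pred {n m : ℕ} (hmn : m ≤ n) (z : K) :
    (z + 1) ^ (n + 1) / n * ∑ k ∈ range m, z ^ k / ((n - 1).choose k : K)
      = tailSum n 0 z + ((harmonic n : K) + harmonic m - harmonic (n - m)) * z ^ n
        - tailSum n m z := by
  induction m with
  | zero => simp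
  | succ m ih =>
    have hm : m < n := by omega
    have hH : (harmonic (n - m) : K) = harmonic (n - (m + 1)) + 1 / (n - m) := by
      rw [show n - m = n - (m + 1) + 1 by omega, harmonic_succ]
      push_cast [Nat.cast_sub hm]
      ring
    rw [sum_range_succ, mul_add, ih hm.le, hH, harmonic_succ]
    push_cast
    linear_combination -tailSum_sub_tailSum_succ hm z

end

theorem poly_identity_one_general (n m : ℕ) (hmn : m ≤ n) (z : ℂ) :
    (z + 1) ^ (n + 1) / n * ∑ k ∈ Finset.range m, z ^ k / (Nat.choose (n - 1) k : ℂ)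
      = (∑ k ∈ Finset.Icc 1 n, (Nat.choose n k : ℂ) * z ^ (n - k) / k)
        + ((∑ i ∈ Finset.Icc 1 n, (1 : ℂ) / i) + (∑ i ∈ Finset.Icc 1 m, (1 : ℂ) / i)
           - (∑ i ∈ Finset.Icc 1 (n - m), (1 : ℂ) / i)) * z ^ n
        - z ^ m / (Nat.choose n m : ℂ) *
            ∑ k ∈ (Finset.range (n + 1)).erase m,
              (Nat.choose n k : ℂ) * z ^ (n - k) / ((k : ℂ) - m) := by
  have hH (j : ℕ) : ∑ i ∈ Icc 1 j, (1 : ℂ) / i = harmonic j := by simp [harmonic_eq_sum_Icc]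
  rw [hH, hH, hH, ← tailSum_zero, ← tailSum_eq_mul_sum_erase]
  exact mul_sum_range_pow_div_choose_pred hmn z

theorem poly_identity_one (n m : ℕ) (hm : 1 ≤ m) (hmn : m ≤ n) (z : ℂ) :
    (z + 1) ^ (n + 1) / n * ∑ k ∈ Finset.range m, z ^ k / (Nat.choose (n - 1) k : ℂ)
      = (∑ k ∈ Finset.Icc 1 n, (Nat.choose n k : ℂ) * z ^ (n - k) / k)
        + ((∑ i ∈ Finset.Icc 1 n, (1 : ℂ) / i) + (∑ i ∈ Finset.Icc 1 m, (1 : ℂ) / i)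
           - (∑ i ∈ Finset.Icc 1 (n - m), (1 : ℂ) / i)) * z ^ n
        - z ^ m / (Nat.choose n m : ℂ) *
            ∑ k ∈ (Finset.range (n + 1)).erase m,
              (Nat.choose n k : ℂ) * z ^ (n - k) / ((k : ℂ) - m) :=
  poly_identity_one_general n m hmn z
end

section
/- For any prime p > 3, H_{⌊p/6⌋} ≡ -2·q_p(2) - (3/2)·q_p(3) (mod p). -/
/-!
Lerch's formula `a q_p(a) ≡ ∑_{k=1}^{p-1} ⌊ak/p⌋ / k` comes from comparing `q_p(ak) = q_p(a) + q_p(k)`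
with `q_p(r + pf) ≡ q_p(r) - f / r` for `ak = r + p⌊ak/p⌋`, the residues `r` running over a
permutation of `1, …, p-1`. Counting `⌊ak/p⌋` as the number of `1 ≤ j < a` with `⌊jp/a⌋ < k`
and using `H_{p-1} ≡ 0` turns it into `a q_p(a) ≡ -∑_{j=1}^{a-1} H_{⌊jp/a⌋}`. For `a = 2, 3, 6`,
together with `q_p(6) ≡ q_p(2) + q_p(3)` and the symmetry `H_{p-1-m} ≡ H_m`, this gives three
linear relations between `H_{⌊p/6⌋}, H_{⌊p/3⌋}, H_{⌊p/2⌋}, q_p(2), q_p(3)`, which determine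
`H_{⌊p/6⌋}`.
-/

open Finset

def fermatQuotient (p : ℕ) (a : ℤ) : ℤ := (a ^ (p - 1) - 1) / p

section FermatQuotient

variable {p : ℕ} [Fact p.Prime]

theorem pow_sub_one_eq_one_add_mul_fermatQuotient {a : ℤ} (ha : (a : ZMod p) ≠ 0) :
    a ^ (p - 1) = 1 + p * fermatQuotient p a := by
  have hdvd : (p : ℤ) ∣ a ^ (p - 1) - 1 := by
    rw [← ZMod.intCast_zmod_eq_zero_iff_dvd]
    push_cast
    rw [ZMod.pow_card_sub_one_eq_one ha, sub_self]
  rw [fermatQuotient, Int.mul_ediv_cancel' hdvd]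
  ring

theorem fermatQuotient_mul {a b : ℤ} (ha : (a : ZMod p) ≠ 0) (hb : (b : ZMod p) ≠ 0) :
    (fermatQuotient p (a * b) : ZMod p) = fermatQuotient p a + fermatQuotient p b := by
  have hab : ((a * b : ℤ) : ZMod p) ≠ 0 := by push_cast; exact mul_ne_zero ha hb
  have hp : (p : ℤ) ≠ 0 := by exact_mod_cast (Fact.out : p.Prime).ne_zero
  have key : fermatQuotient p (a * b) = fermatQuotient p a + fermatQuotient p b
      + p * (fermatQuotient p a * fermatQuotient p b) := by
    apply mul_left_cancel₀ hp
    linear_combination -pow_sub_one_eq_one_add_mul_fermatQuotient hab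
      + b ^ (p - 1) * pow_sub_one_eq_one_add_mul_fermatQuotient ha
      + (1 + p * fermatQuotient p a) * pow_sub_one_eq_one_add_mul_fermatQuotient hb
  rw [key]
  push_cast
  rw [ZMod.natCast_self]
  ring

theorem fermatQuotient_add_mul {r : ℤ} (hr : (r : ZMod p) ≠ 0) (f : ℤ) :
    (fermatQuotient p (r + p * f) : ZMod p) = fermatQuotient p r - f / r := by
  have hp : (p : ℤ) ≠ 0 := by exact_mod_cast (Fact.out : p.Prime).ne_zero
  have hrf : ((r + p * f : ℤ) : ZMod p) ≠ 0 := by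
    push_cast
    rwa [ZMod.natCast_self, zero_mul, add_zero]
  obtain ⟨c, hc⟩ := sq_dvd_add_pow_sub_sub ((p : ℤ) * f) r (p - 1)
  have key : fermatQuotient p (r + p * f)
      = fermatQuotient p r + r ^ (p - 1 - 1) * f * (p - 1 : ℕ) + p * f ^ 2 * c := by
    apply mul_left_cancel₀ hp
    linear_combination hc - pow_sub_one_eq_one_add_mul_fermatQuotient hrf
      + pow_sub_one_eq_one_add_mul_fermatQuotient hr
  have hinv : (r : ZMod p) ^ (p - 1 - 1) = (r : ZMod p)⁻¹ := by
    refine eq_inv_of_mul_eq_one_left ?_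
    rw [← pow_succ, Nat.sub_add_cancel (Nat.le_sub_one_of_lt (Fact.out : p.Prime).one_lt),
      ZMod.pow_card_sub_one_eq_one hr]
  rw [key]
  push_cast [Nat.cast_sub (Fact.out : p.Prime).one_le]
  rw [ZMod.natCast_self, hinv]
  ring

end FermatQuotient

theorem sum_Ico_mul_mod_eq {M : Type*} [AddCommMonoid M] {n a : ℕ} (ha : a.Coprime n)
    (f : ℕ → M) : ∑ k ∈ Ico 1 n, f (a * k % n) = ∑ k ∈ Ico 1 n, f k := by
  have hmaps : Set.MapsTo (fun k => a * k % n) (Ico 1 n : Set ℕ) (Ico 1 n : Set ℕ) := by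
    intro k hk
    simp only [coe_Ico, Set.mem_Ico] at hk ⊢
    have hndvd : ¬ n ∣ a * k := fun h =>
      absurd (Nat.le_of_dvd (by omega) (ha.symm.dvd_of_dvd_mul_left h)) (by omega)
    exact ⟨Nat.pos_of_ne_zero fun h => hndvd (Nat.dvd_of_mod_eq_zero h),
      Nat.mod_lt _ (by omega)⟩
  have hinj : Set.InjOn (fun k => a * k % n) (Ico 1 n : Set ℕ) := by
    intro k hk l hl hkl
    simp only [coe_Ico, Set.mem_Ico] at hk hl
    have := Nat.ModEq.cancel_left_of_coprime (ha.symm.gcd_eq_one) hkl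
    rwa [Nat.ModEq, Nat.mod_eq_of_lt hk.2, Nat.mod_eq_of_lt hl.2] at this
  exact sum_nbij _ hmaps hinj (surjOn_of_injOn_of_card_le _ hmaps hinj le_rfl) fun _ _ => rfl

theorem card_filter_mul_div_lt_eq {a p k : ℕ} (hk : k < p) (hak : ¬ p ∣ a * k) :
    #{j ∈ Ico 1 a | j * p / a < k} = a * k / p := by
  have ha : 0 < a := Nat.pos_of_ne_zero fun h => hak (by simp [h])
  suffices {j ∈ Ico 1 a | j * p / a < k} = Ico 1 (a * k / p + 1) by simp [this]
  ext j
  simp only [mem_filter, mem_Ico, Nat.div_lt_iff_lt_mul ha, Nat.lt_add_one_iff,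
    Nat.le_div_iff_mul_le (by omega : 0 < p)]
  have hne : j * p ≠ a * k := fun h => hak ⟨j, by rw [← h, mul_comm]⟩
  have hlt : a * k < a * p := Nat.mul_lt_mul_of_pos_left hk ha
  rw [mul_comm k a]
  constructor
  · rintro ⟨⟨h1, -⟩, h2⟩
    exact ⟨h1, h2.le⟩
  · rintro ⟨h1, h2⟩
    refine ⟨⟨h1, ?_⟩, lt_of_le_of_ne h2 hne⟩
    by_contra! h
    nlinarith

theorem sum_Ico_div_smul_eq_sum_sum_Ico {M : Type*} [AddCommMonoid M] {p a : ℕ} (hp : p.Prime)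
    (ha : ¬ p ∣ a) (f : ℕ → M) :
    ∑ k ∈ Ico 1 p, (a * k / p) • f k = ∑ j ∈ Ico 1 a, ∑ k ∈ Ico (j * p / a + 1) p, f k :=
  calc ∑ k ∈ Ico 1 p, (a * k / p) • f k
      = ∑ k ∈ Ico 1 p, ∑ j ∈ Ico 1 a with j * p / a < k, f k := by
        refine sum_congr rfl fun k hk => ?_
        rw [mem_Ico] at hk
        have hak : ¬ p ∣ a * k := fun h => (hp.dvd_mul.1 h).elim ha
          fun hpk => absurd (Nat.le_of_dvd (by omega) hpk) (by omega)
        rw [sum_const, card_filter_mul_div_lt_eq hk.2 hak]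
    _ = ∑ j ∈ Ico 1 a, ∑ k ∈ Ico 1 p with j * p / a < k, f k := by
        simp only [sum_filter]
        exact sum_comm
    _ = ∑ j ∈ Ico 1 a, ∑ k ∈ Ico (j * p / a + 1) p, f k := by
        refine sum_congr rfl fun j _ => sum_congr ?_ fun _ _ => rfl
        ext k
        simp only [mem_filter, mem_Ico]
        generalize j * p / a = m
        omega

/-- Lerch's formula. -/
theorem mul_fermatQuotient_eq_sum_Ico {p a : ℕ} [Fact p.Prime] (ha : ¬ p ∣ a) :
    (a : ZMod p) * fermatQuotient p a = ∑ k ∈ Ico 1 p, (a * k / p) • (k : ZMod p)⁻¹ := by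
  have ha' : (a : ZMod p) ≠ 0 := by rwa [Ne, ZMod.natCast_eq_zero_iff]
  have hterm : ∀ k ∈ Ico 1 p, (a * k / p) • (k : ZMod p)⁻¹
      = a * (fermatQuotient p (a * k % p : ℕ) - fermatQuotient p k) - a * fermatQuotient p a := by
    intro k hk
    rw [mem_Ico] at hk
    have hk' : ((k : ℤ) : ZMod p) ≠ 0 := by
      rw [Int.cast_natCast, Ne, ZMod.natCast_eq_zero_iff]
      exact fun h => absurd (Nat.le_of_dvd (by omega) h) (by omega)
    have hr : (((a * k % p : ℕ) : ℤ) : ZMod p) = a * k := by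
      push_cast [ZMod.natCast_mod]
      rfl
    have hdiv : ((a * k : ℕ) : ℤ) = (a * k % p : ℕ) + p * (a * k / p : ℕ) := by
      exact_mod_cast (Nat.mod_add_div _ _).symm
    have hshift := fermatQuotient_add_mul (r := (a * k % p : ℕ))
      (by rw [hr]; exact mul_ne_zero ha' (by simpa using hk')) (a * k / p : ℕ)
    rw [← hdiv, Nat.cast_mul, fermatQuotient_mul (by simpa using ha') hk', hr,
      Int.cast_natCast] at hshift
    rw [nsmul_eq_mul, sub_eq_iff_eq_add.mp hshift.symm]
    field_simp
    ring
  rw [sum_congr rfl hterm, sum_sub_distrib, ← mul_sum, sum_sub_distrib,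
    sum_Ico_mul_mod_eq (f := fun m => (fermatQuotient p m : ZMod p))
      (Nat.coprime_comm.1 ((Nat.Prime.coprime_iff_not_dvd Fact.out).2 ha)),
    sub_self, mul_zero, zero_sub, sum_const, Nat.card_Ico, nsmul_eq_mul,
    Nat.cast_sub (Fact.out : p.Prime).one_le, ZMod.natCast_self]
  ring

section Harmonic

variable {p m n : ℕ}

theorem harmonicZMod_add_sum_Ico (hm : m < p) :
    harmonicZMod p m + ∑ k ∈ Ico (m + 1) p, (k : ZMod p)⁻¹ = harmonicZMod p (p - 1) := by
  rw [harmonicZMod, harmonicZMod, ← Ico_add_one_right_eq_Icc, ← Ico_add_one_right_eq_Icc,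
    Nat.sub_add_cancel (by omega),
    sum_Ico_consecutive _ (by omega : 1 ≤ m + 1) (by omega : m + 1 ≤ p)]

variable [Fact p.Prime]

theorem sum_Ico_inv_eq_neg_harmonicZMod_sub (hm : m < p) :
    ∑ k ∈ Ico (m + 1) p, (k : ZMod p)⁻¹ = -harmonicZMod p (p - 1 - m) := by
  have hreflect := sum_Ico_reflect (fun k => (k : ZMod p)⁻¹) 1 (m := p - m) (n := p) (by omega)
  rw [show p + 1 - (p - m) = m + 1 by omega, Nat.add_sub_cancel] at hreflect
  rw [← hreflect, harmonicZMod, ← Ico_add_one_right_eq_Icc, show p - 1 - m + 1 = p - m by omega,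
    ← sum_neg_distrib]
  refine sum_congr rfl fun k hk => ?_
  rw [Nat.cast_sub (by rw [mem_Ico] at hk; omega), ZMod.natCast_self, zero_sub, inv_neg]

theorem harmonicZMod_sub_one_eq_zero (hp : p ≠ 2) : harmonicZMod p (p - 1) = 0 := by
  have h := harmonicZMod_add_sum_Ico (p := p) (Fact.out : p.Prime).pos
  rw [sum_Ico_inv_eq_neg_harmonicZMod_sub (Fact.out : p.Prime).pos, Nat.sub_zero] at h
  have h2 : (2 : ZMod p) ≠ 0 := Ring.two_ne_zero (by rwa [ZMod.ringChar_zmod_n])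
  refine (mul_eq_zero.1 ?_).resolve_left h2
  simpa [harmonicZMod, two_mul, eq_neg_iff_add_eq_zero] using h.symm

theorem sum_Ico_inv_eq_neg_harmonicZMod (hp : p ≠ 2) (hm : m < p) :
    ∑ k ∈ Ico (m + 1) p, (k : ZMod p)⁻¹ = -harmonicZMod p m := by
  linear_combination harmonicZMod_add_sum_Ico hm + harmonicZMod_sub_one_eq_zero hp

theorem harmonicZMod_eq_of_add_add_one_eq (hp : p ≠ 2) (h : m + n + 1 = p) :
    harmonicZMod p m = harmonicZMod p n := by
  obtain rfl : n = p - 1 - m := by omega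
  linear_combination sum_Ico_inv_eq_neg_harmonicZMod hp (by omega : m < p)
    - sum_Ico_inv_eq_neg_harmonicZMod_sub (by omega : m < p)

end Harmonic

theorem mul_fermatQuotient_eq_neg_sum_harmonicZMod {p a : ℕ} [Fact p.Prime] (hp : p ≠ 2)
    (ha : ¬ p ∣ a) :
    (a : ZMod p) * fermatQuotient p a = -∑ j ∈ Ico 1 a, harmonicZMod p (j * p / a) := by
  rw [mul_fermatQuotient_eq_sum_Ico ha, sum_Ico_div_smul_eq_sum_sum_Ico Fact.out ha,
    ← sum_neg_distrib]
  refine sum_congr rfl fun j hj => sum_Ico_inv_eq_neg_harmonicZMod hp ?_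
  rw [mem_Ico] at hj
  rw [Nat.div_lt_iff_lt_mul (by omega), mul_comm p]
  exact Nat.mul_lt_mul_of_pos_right hj.2 (Fact.out : p.Prime).pos

theorem harmonic_sixth_eq_fermat_quotients (p : ℕ) (hp : p.Prime) (hp3 : 3 < p) :
    (∑ k ∈ Finset.Icc 1 (p / 6), ((k : ZMod p))⁻¹)
      = -2 * (((2 ^ (p - 1) - 1 : ℤ) / (p : ℤ) : ℤ) : ZMod p)
        - (3 : ZMod p) * (2 : ZMod p)⁻¹ * (((3 ^ (p - 1) - 1 : ℤ) / (p : ℤ) : ℤ) : ZMod p) := by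
  have : Fact p.Prime := ⟨hp⟩
  have hp2 : p ≠ 2 := by omega
  have h2 : ¬ p ∣ 2 := fun h => absurd (Nat.le_of_dvd two_pos h) (by omega)
  have h3 : ¬ p ∣ 3 := fun h => absurd (Nat.le_of_dvd three_pos h) (by omega)
  have hp6 : p % 6 = 1 ∨ p % 6 = 5 := by
    have := (Nat.prime_dvd_prime_iff_eq Nat.prime_two hp).not.2 (by omega)
    have := (Nat.prime_dvd_prime_iff_eq Nat.prime_three hp).not.2 (by omega)
    omega
  have hne {n : ℕ} (hn : ¬ p ∣ n) : (n : ZMod p) ≠ 0 := (ZMod.natCast_eq_zero_iff n p).not.2 hn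
  have e2 := mul_fermatQuotient_eq_neg_sum_harmonicZMod hp2 h2
  have e3 := mul_fermatQuotient_eq_neg_sum_harmonicZMod hp2 h3
  have e6 := mul_fermatQuotient_eq_neg_sum_harmonicZMod (a := 6) hp2
    fun h => (hp.dvd_mul.1 (show p ∣ 2 * 3 from h)).elim h2 h3
  have hq6 : (fermatQuotient p 6 : ZMod p) = fermatQuotient p 2 + fermatQuotient p 3 :=
    fermatQuotient_mul (a := 2) (b := 3) (by exact_mod_cast hne h2) (by exact_mod_cast hne h3)
  simp only [sum_Ico_eq_sum_range, sum_range_succ, sum_range_zero] at e2 e3 e6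
  norm_num [show 4 * p / 6 = 2 * p / 3 by omega, show 3 * p / 6 = p / 2 by omega,
    show 2 * p / 6 = p / 3 by omega, hq6,
    harmonicZMod_eq_of_add_add_one_eq hp2 (by omega : 2 * p / 3 + p / 3 + 1 = p),
    harmonicZMod_eq_of_add_add_one_eq hp2 (by omega : 5 * p / 6 + p / 6 + 1 = p)] at e2 e3 e6
  have h2inv : (2 : ZMod p) * 2⁻¹ = 1 := mul_inv_cancel₀ (by exact_mod_cast hne h2)
  change harmonicZMod p (p / 6)
    = -2 * (fermatQuotient p 2 : ZMod p) - 3 * 2⁻¹ * fermatQuotient p 3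
  linear_combination (2⁻¹ : ZMod p) * (e6 - e3 - e2)
    - (2 * (fermatQuotient p 2 : ZMod p) + harmonicZMod p (p / 6)) * h2inv
end

section
/- For any prime p with p ≡ 1 (mod 3) and any integer k with (p-1)/2 ≥ k ≥ (p+2)/3, the Pochhammer ratio (1/3 - p/6)_k / (4/3 - 2p/3)_k ≡ -1/(2(3k+1)) (mod p), where both sides are viewed in Z_p. -/
/-!
Write `p = 3m + 4`. Clearing denominators, `(1/3 - p/6)_k = ∏_{j<k} (6j + 2 - p) / 6^k` and
`(4/3 - 2p/3)_k = ∏_{j<k} (3j + 4 - 2p) / 3^k`, and in the range `m + 2 ≤ k ≤ (p - 1)/2` each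
product has exactly one factor divisible by `p`: `p` itself at `j = m + 1`, and `-p` at `j = m`.
Cancelling them leaves `-N / (2^k M)` (`N = numCofactor`, `M = denCofactor`) with `M` prime
to `p`. Modulo `p`,
`N ≡ 2^(k-1) ∏_{j ≠ m+1} (3j + 1)` and `M ≡ ∏_{j ≠ m} (3j + 4)`, and shifting the index turns
the latter into `(3k + 1) ∏_{j ≠ m+1} (3j + 1)`, so `2^k M ≡ 2 (3k + 1) N`.
-/

open Finset

lemma ascPochhammer_eval_div {K : Type*} [Field K] (a : K) {c : K} (hc : c ≠ 0) (k : ℕ) :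
    (ascPochhammer K k).eval (a / c) = (∏ j ∈ range k, (a + j * c)) / c ^ k := by
  induction k with
  | zero => simp
  | succ k ih =>
    rw [ascPochhammer_succ_right, Polynomial.eval_mul, ih, prod_range_succ, pow_succ]
    simp only [Polynomial.eval_add, Polynomial.eval_X, Polynomial.eval_natCast]
    rw [div_add' _ _ _ hc, div_mul_div_comm]

lemma mul_prod_range_erase_succ {M : Type*} [CommMonoidWithZero M] [IsCancelMulZero M] (f : ℕ → M)
    {k m : ℕ} (hm : m + 1 < k) (hf : f (m + 1) ≠ 0) :
    f k * ∏ j ∈ (range k).erase (m + 1), f j = f 0 * ∏ j ∈ (range k).erase m, f (j + 1) := by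
  refine mul_left_cancel₀ hf ?_
  calc f (m + 1) * (f k * ∏ j ∈ (range k).erase (m + 1), f j)
      = ∏ j ∈ range (k + 1), f j := by
        rw [mul_left_comm, mul_prod_erase _ _ (mem_range.2 hm), prod_range_succ, mul_comm]
    _ = f (m + 1) * (f 0 * ∏ j ∈ (range k).erase m, f (j + 1)) := by
        rw [mul_left_comm, mul_prod_erase (range k) (fun j => f (j + 1)) (mem_range.2 (by omega)),
          prod_range_succ']
        exact mul_comm _ _

lemma two_pow_mul_prod_erase_eq (k m : ℕ) (hmk : m + 2 ≤ k) :
    2 ^ k * ∏ j ∈ (range k).erase m, (3 * j + 4) =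
      2 * (3 * k + 1) * ∏ j ∈ (range k).erase (m + 1), (6 * j + 2) := by
  have hshift := mul_prod_range_erase_succ (fun j => 3 * j + 1) (by omega : m + 1 < k) (by omega)
  have hcard : ((range k).erase (m + 1)).card = k - 1 := by
    rw [card_erase_of_mem (mem_range.2 (by omega)), card_range]
  have hsix : ∏ j ∈ (range k).erase (m + 1), (6 * j + 2) =
      2 ^ (k - 1) * ∏ j ∈ (range k).erase (m + 1), (3 * j + 1) := by
    rw [← hcard, ← prod_const, ← prod_mul_distrib]
    exact prod_congr rfl fun j _ => by ring
  obtain ⟨k, rfl⟩ : ∃ k', k = k' + 1 := ⟨k - 1, by omega⟩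
  simp only [mul_zero, zero_add, one_mul] at hshift
  rw [hsix, Nat.add_sub_cancel, prod_congr rfl fun j _ => show 3 * j + 4 = 3 * (j + 1) + 1 by ring,
    ← hshift]
  ring

lemma ZMod.natCast_ne_zero_of_lt_two_mul {p n : ℕ} (hn : n ≠ 0) (hlt : n < 2 * p) (hne : n ≠ p) :
    (n : ZMod p) ≠ 0 := by
  rw [Ne, ZMod.natCast_eq_zero_iff]
  exact fun h => hne (Nat.eq_of_dvd_of_lt_two_mul hn h hlt)

lemma Padic.norm_intCast_div_le_inv {p : ℕ} [Fact p.Prime] {a b : ℤ} (ha : (a : ZMod p) = 0)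
    (hb : (b : ZMod p) ≠ 0) : ‖(a : ℚ_[p]) / b‖ ≤ (p : ℝ)⁻¹ := by
  rw [ZMod.intCast_zmod_eq_zero_iff_dvd] at ha
  rw [Ne, ZMod.intCast_zmod_eq_zero_iff_dvd] at hb
  have hb1 : ‖(b : ℚ_[p])‖ = 1 :=
    le_antisymm (Padic.norm_int_le_one b) (not_lt.1 (hb ∘ Padic.norm_intCast_lt_one_iff.1))
  have ha1 := (Padic.norm_int_le_pow_iff_dvd a 1).2 (by simpa using ha)
  rwa [norm_div, hb1, div_one, ← zpow_neg_one]

def numCofactor (p m k : ℕ) : ℤ := ∏ j ∈ (range k).erase (m + 1), (6 * (j : ℤ) + 2 - p)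

def denCofactor (p m k : ℕ) : ℤ := ∏ j ∈ (range k).erase m, (3 * (j : ℤ) + 4 - 2 * p)

lemma ascPochhammer_eval_one_third_sub_div_six {K : Type*} [Field K] [CharZero K] {p m k : ℕ}
    (hpm : p = 3 * m + 4) (hmk : m + 1 < k) :
    (ascPochhammer K k).eval ((1 : K) / 3 - p / 6) = p * numCofactor p m k / 6 ^ k := by
  rw [show (1 : K) / 3 - p / 6 = (2 - p) / 6 by ring, ascPochhammer_eval_div _ (by norm_num),
    ← mul_prod_erase _ _ (mem_range.2 hmk), numCofactor]
  push_cast [hpm]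
  congr 2
  · ring
  · exact prod_congr rfl fun j _ => by ring

lemma ascPochhammer_eval_four_thirds_sub_div_three {K : Type*} [Field K] [CharZero K]
    {p m k : ℕ} (hpm : p = 3 * m + 4) (hmk : m < k) :
    (ascPochhammer K k).eval ((4 : K) / 3 - 2 * p / 3) = -p * denCofactor p m k / 3 ^ k := by
  rw [show (4 : K) / 3 - 2 * p / 3 = (4 - 2 * p) / 3 by ring,
    ascPochhammer_eval_div _ (by norm_num), ← mul_prod_erase _ _ (mem_range.2 hmk), denCofactor]
  push_cast [hpm]
  congr 2
  · ring
  · exact prod_congr rfl fun j _ => by ring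

lemma denCofactor_cast_ne_zero {p m k : ℕ} [Fact p.Prime] (hpm : p = 3 * m + 4)
    (hk : 2 * k ≤ 3 * m + 3) :
    (denCofactor p m k : ZMod p) ≠ 0 := by
  push_cast [denCofactor]
  simp only [ZMod.natCast_self, mul_zero, sub_zero]
  refine prod_ne_zero_iff.2 fun j hj => ?_
  obtain ⟨hjm, hjk⟩ : j ≠ m ∧ j < k := by simpa using hj
  exact_mod_cast ZMod.natCast_ne_zero_of_lt_two_mul (n := 3 * j + 4) (by omega) (by omega)
    (by omega)

lemma cast_two_pow_mul_denCofactor_sub_eq_zero (p : ℕ) {m k : ℕ} (hmk : m + 2 ≤ k) :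
    ((2 ^ k * denCofactor p m k - 2 * (3 * k + 1) * numCofactor p m k : ℤ) : ZMod p) = 0 := by
  push_cast [denCofactor, numCofactor]
  simp only [ZMod.natCast_self, mul_zero, sub_zero, sub_eq_zero]
  exact_mod_cast congrArg (Nat.cast : ℕ → ZMod p) (two_pow_mul_prod_erase_eq k m hmk)

theorem pochhammer_ratio_mod_p (p : ℕ) [hp : Fact p.Prime] (h3 : p % 3 = 1) (k : ℕ)
    (hk1 : (p + 2) / 3 ≤ k) (hk2 : k ≤ (p - 1) / 2) :
    ‖(ascPochhammer ℚ_[p] k).eval ((1 : ℚ_[p]) / 3 - (p : ℚ_[p]) / 6)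
        / (ascPochhammer ℚ_[p] k).eval ((4 : ℚ_[p]) / 3 - 2 * (p : ℚ_[p]) / 3)
      - (-(1 / (2 * (3 * (k : ℚ_[p]) + 1))))‖ ≤ (p : ℝ)⁻¹ := by
  obtain ⟨m, hpm⟩ : ∃ m, p = 3 * m + 4 := ⟨p / 3 - 1, by have := hp.out.two_le; omega⟩
  have hM := denCofactor_cast_ne_zero hpm (k := k) (by omega)
  have h3k : ((3 * k + 1 : ℕ) : ZMod p) ≠ 0 :=
    ZMod.natCast_ne_zero_of_lt_two_mul (by omega) (by omega) (by omega)
  have h2 : ((2 : ℕ) : ZMod p) ≠ 0 :=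
    ZMod.natCast_ne_zero_of_lt_two_mul (by omega) (by omega) (by omega)
  have hB : ((2 ^ (k + 1) * (3 * k + 1) * denCofactor p m k : ℤ) : ZMod p) ≠ 0 := by
    push_cast at h3k h2 ⊢
    exact mul_ne_zero (mul_ne_zero (pow_ne_zero _ h2) h3k) hM
  convert Padic.norm_intCast_div_le_inv
    (cast_two_pow_mul_denCofactor_sub_eq_zero p (by omega : m + 2 ≤ k)) hB using 2
  have hM0 : (denCofactor p m k : ℚ_[p]) ≠ 0 :=
    Int.cast_ne_zero.2 fun h => hM (by rw [h, Int.cast_zero])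
  have hk0 : (3 * k + 1 : ℚ_[p]) ≠ 0 := by exact_mod_cast (3 * k).succ_ne_zero
  have hp0 : (p : ℚ_[p]) ≠ 0 := Nat.cast_ne_zero.2 hp.out.ne_zero
  rw [ascPochhammer_eval_one_third_sub_div_six hpm (by omega),
    ascPochhammer_eval_four_thirds_sub_div_three hpm (by omega),
    show (6 : ℚ_[p]) = 2 * 3 by norm_num, mul_pow]
  push_cast
  field_simp
  ring
end
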